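/- arXiv:1510.07379 — 3 statements merged into one kernel-verified Lean document; each statement's English description precedes it below -/
import Mathlib

section
/- Let A ∈ ℂ^{n×N} satisfy A A^* = I_n, let x0 ∈ ℂ^n, b = |A^* x0|, and let X ⊆ ℂ^n be a nonempty closed convex set (for the real inner-product structure) with nearest-point projection P_X. Define the alternating-projection iterates x^{(k+1)} = P_X(A(b ⊙ phase(A^* x^{(k)}))) starting from any x^{(1)} ∈ X. Then for every k ≥ 1 one has F(x^{(k)}) − F(x^{(k+1)}) ≥ (1/2) ‖x^{(k+1)} − x^{(k)}‖²; in particular the sequence F(x^{(1)}), F(x^{(2)}), … is nonincreasing. -/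
/-!
The iteration is a majorize–minimize scheme. Since `A A^* = I`, the coefficient map
`x ↦ (⟪a j, x⟫)_j` is an isometry with adjoint `c ↦ ∑ j, c j • a j`, so for fixed coefficients `c`
the surrogate `∑ j, ‖⟪a j, u⟫ - c j‖²` equals `‖u - ∑ j, c j • a j‖²` up to a constant. With
`c j = b j · phase ⟪a j, x⟫` the surrogate majorizes `2 F` and touches it at `x`, while the next
iterate is the projection onto `X` of the surrogate's unconstrained minimizer; the obtuse-angle
inequality for projections onto convex sets yields the extra `½ ‖x⁺ - x‖²`.
-/

/-- `phase z = z/|z|`, with the convention `phase 0 = 1`. -/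
noncomputable def phase (z : ℂ) : ℂ := if z = 0 then 1 else z / ‖z‖

open scoped InnerProductSpace

lemma norm_phase (z : ℂ) : ‖phase z‖ = 1 := by
  by_cases hz : z = 0
  · simp [phase, hz]
  · rw [phase, if_neg hz, norm_div, Complex.norm_real, norm_norm,
      div_self (norm_ne_zero_iff.mpr hz)]

lemma ofReal_norm_mul_phase (z : ℂ) : (‖z‖ : ℂ) * phase z = z := by
  by_cases hz : z = 0
  · simp [phase, hz]
  · rw [phase, if_neg hz, mul_div_cancel₀ _ (by exact_mod_cast norm_ne_zero_iff.mpr hz)]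

lemma norm_sub_ofReal_mul_phase_self (z : ℂ) (b : ℝ) :
    ‖z - b * phase z‖ = |‖z‖ - b| := by
  have h : z - b * phase z = ((‖z‖ - b : ℝ) : ℂ) * phase z := by
    rw [Complex.ofReal_sub, sub_mul, ofReal_norm_mul_phase]
  rw [h, norm_mul, norm_phase, mul_one, Complex.norm_real, Real.norm_eq_abs]

lemma abs_norm_sub_le_norm_sub_ofReal_mul_phase (z w : ℂ) {b : ℝ} (hb : 0 ≤ b) :
    |‖z‖ - b| ≤ ‖z - b * phase w‖ := by
  simpa [norm_phase, abs_of_nonneg hb] using abs_norm_sub_norm_le z (b * phase w)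

section Frame

variable {𝕜 E ι : Type*} [RCLike 𝕜] [NormedAddCommGroup E] [InnerProductSpace 𝕜 E] [Fintype ι]
  {a : ι → E}

lemma sum_norm_inner_sq_of_reconstruction (hframe : ∀ x, ∑ j, ⟪a j, x⟫_𝕜 • a j = x) (u : E) :
    ∑ j, ‖⟪a j, u⟫_𝕜‖ ^ 2 = ‖u‖ ^ 2 := by
  have h : ⟪u, u⟫_𝕜 = ∑ j, (‖⟪a j, u⟫_𝕜‖ ^ 2 : 𝕜) := by
    calc ⟪u, u⟫_𝕜 = ⟪∑ j, ⟪a j, u⟫_𝕜 • a j, u⟫_𝕜 := by rw [hframe]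
      _ = _ := by simp only [sum_inner, inner_smul_left, RCLike.conj_mul]
  rw [inner_self_eq_norm_sq_to_K] at h
  exact_mod_cast h.symm

lemma sum_norm_inner_sub_sq_of_reconstruction (hframe : ∀ x, ∑ j, ⟪a j, x⟫_𝕜 • a j = x)
    (c : ι → 𝕜) (u : E) :
    ∑ j, ‖⟪a j, u⟫_𝕜 - c j‖ ^ 2
      = ‖u - ∑ j, c j • a j‖ ^ 2 + (∑ j, ‖c j‖ ^ 2 - ‖∑ j, c j • a j‖ ^ 2) := by
  have hcross : ⟪u, ∑ j, c j • a j⟫_𝕜 = ∑ j, ⟪⟪a j, u⟫_𝕜, c j⟫_𝕜 := by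
    rw [inner_sum]
    refine Finset.sum_congr rfl fun j _ => ?_
    rw [inner_smul_right, RCLike.inner_apply, inner_conj_symm, mul_comm]
  simp only [@norm_sub_sq 𝕜, Finset.sum_sub_distrib, Finset.sum_add_distrib,
    sum_norm_inner_sq_of_reconstruction hframe, hcross, map_sum, Finset.mul_sum]
  ring

end Frame

lemma norm_sub_sq_add_norm_sub_sq_le_of_forall_norm_sub_le {F : Type*} [NormedAddCommGroup F]
    [InnerProductSpace ℝ F] {X : Set F} (hX : Convex ℝ X) {y p z : F} (hp : p ∈ X) (hz : z ∈ X)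
    (hmin : ∀ w ∈ X, ‖y - p‖ ≤ ‖y - w‖) :
    ‖y - p‖ ^ 2 + ‖z - p‖ ^ 2 ≤ ‖z - y‖ ^ 2 := by
  have : Nonempty X := ⟨⟨p, hp⟩⟩
  have hbdd : BddBelow (Set.range fun w : X => ‖y - w‖) :=
    ⟨0, by rintro _ ⟨w, rfl⟩; exact norm_nonneg _⟩
  have hinf : ‖y - p‖ = ⨅ w : X, ‖y - w‖ :=
    le_antisymm (le_ciInf fun w => hmin w w.2) (ciInf_le hbdd ⟨p, hp⟩)
  have hobtuse := (norm_eq_iInf_iff_real_inner_le_zero hX hp).1 hinf z hz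
  have hsplit : z - y = (z - p) - (y - p) := by abel
  rw [hsplit, norm_sub_sq_real (z - p), real_inner_comm]
  linarith

section AlternatingProjection

variable {E ι : Type*} [NormedAddCommGroup E] [InnerProductSpace ℂ E] [Fintype ι]

noncomputable def amplitudeLoss (a : ι → E) (b : ι → ℝ) (x : E) : ℝ :=
  (1 / 2) * ∑ j, (‖⟪a j, x⟫_ℂ‖ - b j) ^ 2

/- The real and complex inner products on `E` need not be related: the argument only uses the
norm, which they share. -/
theorem amplitudeLoss_add_half_sq_le [InnerProductSpace ℝ E] {a : ι → E}
    (hframe : ∀ x, ∑ j, ⟪a j, x⟫_ℂ • a j = x) {b : ι → ℝ} (hb : ∀ j, 0 ≤ b j)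
    {X : Set E} (hX : Convex ℝ X) {x y p : E}
    (hy : y = ∑ j, ((b j : ℂ) * phase ⟪a j, x⟫_ℂ) • a j)
    (hx : x ∈ X) (hp : p ∈ X) (hmin : ∀ z ∈ X, ‖y - p‖ ≤ ‖y - z‖) :
    amplitudeLoss a b p + (1 / 2) * ‖p - x‖ ^ 2 ≤ amplitudeLoss a b x := by
  set c : ι → ℂ := fun j => b j * phase ⟪a j, x⟫_ℂ
  have hsurrogate := sum_norm_inner_sub_sq_of_reconstruction hframe c
  rw [← hy] at hsurrogate
  have hx_eq : amplitudeLoss a b x = (1 / 2) * ∑ j, ‖⟪a j, x⟫_ℂ - c j‖ ^ 2 := by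
    simp only [amplitudeLoss, c, norm_sub_ofReal_mul_phase_self, sq_abs]
  have hp_le : amplitudeLoss a b p ≤ (1 / 2) * ∑ j, ‖⟪a j, p⟫_ℂ - c j‖ ^ 2 := by
    refine mul_le_mul_of_nonneg_left (Finset.sum_le_sum fun j _ => ?_) (by norm_num)
    rw [← sq_abs]
    exact pow_le_pow_left₀ (abs_nonneg _)
      (abs_norm_sub_le_norm_sub_ofReal_mul_phase _ _ (hb j)) 2
  have hproj := norm_sub_sq_add_norm_sub_sq_le_of_forall_norm_sub_le hX hp hx hmin
  rw [hsurrogate] at hx_eq hp_le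
  rw [norm_sub_rev y p] at hproj
  rw [hx_eq, norm_sub_rev p x]
  linarith

end AlternatingProjection

theorem AP_sufficient_decrease_general {n N : ℕ} (a : Fin N → EuclideanSpace ℂ (Fin n))
    (hiso : ∀ x : EuclideanSpace ℂ (Fin n), ∑ j, (inner ℂ (a j) x : ℂ) • a j = x)
    (x0 : EuclideanSpace ℂ (Fin n))
    (b : Fin N → ℝ) (hb : ∀ j, b j = ‖(inner ℂ (a j) x0 : ℂ)‖)
    (F : EuclideanSpace ℂ (Fin n) → ℝ)
    (hF : ∀ x, F x = (1/2) * ∑ j, (‖(inner ℂ (a j) x : ℂ)‖ - b j)^2)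
    (X : Set (EuclideanSpace ℂ (Fin n)))
    (hXconv : Convex ℝ X)
    (P : EuclideanSpace ℂ (Fin n) → EuclideanSpace ℂ (Fin n))
    (hP : ∀ y, P y ∈ X ∧ ∀ z ∈ X, ‖y - P y‖ ≤ ‖y - z‖)
    (x : ℕ → EuclideanSpace ℂ (Fin n)) (hx1 : x 1 ∈ X)
    (hrec : ∀ k ≥ 1, x (k+1) =
      P (∑ j, ((b j : ℂ) * phase (inner ℂ (a j) (x k) : ℂ)) • a j)) :
    (∀ k ≥ 1, F (x k) - F (x (k+1)) ≥ (1/2) * ‖x (k+1) - x k‖^2) ∧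
      (∀ k ≥ 1, F (x (k+1)) ≤ F (x k)) := by
  have hF : F = amplitudeLoss a b := funext hF
  have hb : ∀ j, 0 ≤ b j := fun j => (hb j).symm ▸ norm_nonneg _
  have hmem : ∀ k ≥ 1, x k ∈ X := by
    refine Nat.le_induction hx1 fun k hk _ => ?_
    rw [hrec k hk]
    exact (hP _).1
  have hdecrease : ∀ k ≥ 1, F (x k) - F (x (k+1)) ≥ (1/2) * ‖x (k+1) - x k‖^2 := by
    intro k hk
    have := amplitudeLoss_add_half_sq_le hiso hb hXconv rfl (hmem k hk) (hP _).1 (hP _).2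
    rw [hF, hrec k hk]
    linarith
  refine ⟨hdecrease, fun k hk => ?_⟩
  linarith [hdecrease k hk, sq_nonneg ‖x (k+1) - x k‖]

/-- sufficient decrease of the alternating-projection iteration
`x^(k+1) = P_X (A (b ⊙ phase (A^* x^(k))))` for an isometric `A^*` (expressed as the
Parseval frame condition on the columns `a j` of `A`): for every `k ≥ 1`,
`F(x^(k)) - F(x^(k+1)) ≥ (1/2) ‖x^(k+1) - x^(k)‖²`; in particular `F(x^(k))` is
nonincreasing. -/
theorem AP_sufficient_decrease {n N : ℕ} (a : Fin N → EuclideanSpace ℂ (Fin n))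
    (hiso : ∀ x : EuclideanSpace ℂ (Fin n), ∑ j, (inner ℂ (a j) x : ℂ) • a j = x)
    (x0 : EuclideanSpace ℂ (Fin n))
    (b : Fin N → ℝ) (hb : ∀ j, b j = ‖(inner ℂ (a j) x0 : ℂ)‖)
    (F : EuclideanSpace ℂ (Fin n) → ℝ)
    (hF : ∀ x, F x = (1/2) * ∑ j, (‖(inner ℂ (a j) x : ℂ)‖ - b j)^2)
    (X : Set (EuclideanSpace ℂ (Fin n))) (hXne : X.Nonempty)
    (hXc : IsClosed X) (hXconv : Convex ℝ X)
    (P : EuclideanSpace ℂ (Fin n) → EuclideanSpace ℂ (Fin n))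
    (hP : ∀ y, P y ∈ X ∧ ∀ z ∈ X, ‖y - P y‖ ≤ ‖y - z‖)
    (x : ℕ → EuclideanSpace ℂ (Fin n)) (hx1 : x 1 ∈ X)
    (hrec : ∀ k ≥ 1, x (k+1) =
      P (∑ j, ((b j : ℂ) * phase (inner ℂ (a j) (x k) : ℂ)) • a j)) :
    (∀ k ≥ 1, F (x k) - F (x (k+1)) ≥ (1/2) * ‖x (k+1) - x k‖^2) ∧
      (∀ k ≥ 1, F (x (k+1)) ≤ F (x k)) :=
  AP_sufficient_decrease_general a hiso x0 b hb F hF X hXconv P hP x hx1 hrec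
end

section
/- Let n ≥ 2, m ≥ 1, and M ∈ ℂ^{m×n}. Let x0 ∈ ℂ^n with ‖x0‖ = 1, and let x_null ∈ ℂ^n be a unit vector minimizing ‖M x‖ over all x ∈ ℂ^n with ‖x‖ = 1, phase-adjusted so that x0^* x_null is a nonnegative real number. Then there exists x_⊥ ∈ ℂ^n with ‖x_⊥‖ = 1 and x0^* x_⊥ = 0 such that (1/4) · ‖x0 x0^* − x_null x_null^*‖_F² · ‖M x_⊥‖² ≤ ‖M x0‖², where ‖·‖_F is the Frobenius norm on n×n complex matrices (note ‖x0 x0^* − x_null x_null^*‖_F² = 2 − 2 |x0^* x_null|²). -/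
/-!
Since `xnull` minimizes `‖M x‖` on the unit sphere, it is an eigenvector of `M† M` (a minimizer of
its Rayleigh quotient), hence `M xnull ⟂ M w` whenever `w ⟂ xnull`. Write
`x0 = c • xnull + s • w` with `w` a unit vector orthogonal to `xnull` (any such `w` when `x0` is
parallel to `xnull`; this is where `2 ≤ n` enters) and take `xp = conj s • xnull - conj c • w`.
With `a = ‖M xnull‖² ≤ b = ‖M w‖²`, Pythagoras gives `‖M x0‖² = |c|² a + |s|² b` and
`‖M xp‖² = |s|² a + |c|² b`, while the squared Frobenius distance is `2 - 2|c|² = 2|s|²`.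
-/

open Metric ContinuousLinearMap
open scoped ComplexConjugate InnerProductSpace

variable {𝕜 E F : Type*} [RCLike 𝕜]
  [NormedAddCommGroup E] [InnerProductSpace 𝕜 E] [NormedAddCommGroup F] [InnerProductSpace 𝕜 F]

theorem inner_map_eq_zero_of_isMinOn_norm [CompleteSpace E] [CompleteSpace F] (M : E →L[𝕜] F)
    {u w : E} (hmin : IsMinOn (fun x => ‖M x‖) (sphere 0 ‖u‖) u) (huw : ⟪u, w⟫_𝕜 = 0) :
    ⟪M u, M w⟫_𝕜 = 0 := by
  set T := adjoint M ∘L M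
  have hT : IsSelfAdjoint T := by rw [isSelfAdjoint_iff', adjoint_comp, adjoint_adjoint]
  have hextr : IsMinOn T.reApplyInnerSelf (sphere 0 ‖u‖) u := fun x hx => by
    simp only [reApplyInnerSelf_apply, T, comp_apply, adjoint_inner_left,
      inner_self_eq_norm_sq]
    exact pow_le_pow_left₀ (norm_nonneg _) (hmin hx) 2
  calc ⟪M u, M w⟫_𝕜 = ⟪T u, w⟫_𝕜 := (adjoint_inner_left M w (M u)).symm
    _ = 0 := by
      rw [hT.eq_smul_self_of_isLocalExtrOn (Or.inl hextr.localize), inner_smul_left, huw, mul_zero]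

theorem norm_smul_add_smul_sq_of_inner_eq_zero {x y : E} (h : ⟪x, y⟫_𝕜 = 0) (a b : 𝕜) :
    ‖a • x + b • y‖ ^ 2 = ‖a‖ ^ 2 * ‖x‖ ^ 2 + ‖b‖ ^ 2 * ‖y‖ ^ 2 := by
  have hab : ⟪a • x, b • y⟫_𝕜 = 0 := by rw [inner_smul_left, inner_smul_right, h]; ring
  rw [sq, norm_add_sq_eq_norm_sq_add_norm_sq_of_inner_eq_zero _ _ hab, norm_smul, norm_smul]
  ring

theorem exists_norm_eq_one_inner_eq_zero_mem_span_singleton [FiniteDimensional 𝕜 E]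
    (hE : 2 ≤ Module.finrank 𝕜 E) (u : E) {y : E} (hy : ⟪u, y⟫_𝕜 = 0) :
    ∃ w : E, ‖w‖ = 1 ∧ ⟪u, w⟫_𝕜 = 0 ∧ y ∈ 𝕜 ∙ w := by
  rcases eq_or_ne y 0 with rfl | hy0
  · have hK : (𝕜 ∙ u)ᗮ ≠ ⊥ := by
      intro hbot
      have := Submodule.finrank_add_finrank_orthogonal (𝕜 ∙ u)
      rw [hbot, finrank_bot] at this
      have : Module.finrank 𝕜 (𝕜 ∙ u) ≤ 1 := by simpa using finrank_span_le_card ({u} : Set E)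
      omega
    obtain ⟨v, hv, hv0⟩ := Submodule.exists_mem_ne_zero_of_ne_bot hK
    refine ⟨(‖v‖ : 𝕜)⁻¹ • v, by simp [norm_smul, hv0], ?_, zero_mem _⟩
    rw [inner_smul_right, Submodule.mem_orthogonal_singleton_iff_inner_right.mp hv, mul_zero]
  · refine ⟨(‖y‖ : 𝕜)⁻¹ • y, by simp [norm_smul, hy0], by rw [inner_smul_right, hy, mul_zero], ?_⟩
    exact Submodule.mem_span_singleton.mpr ⟨‖y‖, smul_inv_smul₀ (by simpa using hy0) y⟩

theorem exists_norm_eq_one_inner_eq_zero_eq_inner_smul_add_smul [FiniteDimensional 𝕜 E]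
    (hE : 2 ≤ Module.finrank 𝕜 E) {u : E} (hu : ‖u‖ = 1) (x : E) :
    ∃ w : E, ‖w‖ = 1 ∧ ⟪u, w⟫_𝕜 = 0 ∧ ∃ s : 𝕜, x = ⟪u, x⟫_𝕜 • u + s • w := by
  have huu : ⟪u, u⟫_𝕜 = 1 := by simp [inner_self_eq_norm_sq_to_K, hu]
  obtain ⟨w, hw, huw, hy⟩ := exists_norm_eq_one_inner_eq_zero_mem_span_singleton hE u
    (y := x - ⟪u, x⟫_𝕜 • u) (by rw [inner_sub_right, inner_smul_right, huu, mul_one, sub_self])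
  obtain ⟨s, hs⟩ := Submodule.mem_span_singleton.mp hy
  exact ⟨w, hw, huw, s, by rw [hs, add_sub_cancel]⟩

theorem inner_smul_add_smul_conj_smul_add_neg_conj_smul {u w : E} (hnorm : ‖u‖ = ‖w‖)
    (huw : ⟪u, w⟫_𝕜 = 0) (a b : 𝕜) :
    ⟪a • u + b • w, conj b • u + (-conj a) • w⟫_𝕜 = 0 := by
  simp only [inner_add_left, inner_add_right, inner_smul_left, inner_smul_right,
    inner_self_eq_norm_sq_to_K, hnorm, huw, inner_eq_zero_symm.mp huw]
  ring

section EuclideanSpace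

open Finset

variable {ι : Type*} [Fintype ι]

theorem sum_sum_norm_mul_conj_sub_mul_conj_sq (x y : EuclideanSpace 𝕜 ι) :
    ∑ i, ∑ j, ‖x i * conj (x j) - y i * conj (y j)‖ ^ 2
      = ‖x‖ ^ 4 + ‖y‖ ^ 4 - 2 * ‖⟪x, y⟫_𝕜‖ ^ 2 := by
  have hsq (z : EuclideanSpace 𝕜 ι) : ∑ i, ∑ j, ‖z i * conj (z j)‖ ^ 2 = ‖z‖ ^ 4 := by
    simp only [norm_mul, RCLike.norm_conj, mul_pow, ← mul_sum, ← sum_mul,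
      ← EuclideanSpace.norm_sq_eq]
    ring
  have hcross : ∑ i, ∑ j, y i * conj (y j) * conj (x i * conj (x j))
      = ⟪x, y⟫_𝕜 * conj ⟪x, y⟫_𝕜 := by
    rw [PiLp.inner_apply, map_sum, sum_mul_sum]
    refine sum_congr rfl fun i _ => sum_congr rfl fun j _ => ?_
    simp only [RCLike.inner_apply, map_mul, RCLike.conj_conj]
    ring
  calc ∑ i, ∑ j, ‖x i * conj (x j) - y i * conj (y j)‖ ^ 2
      = ∑ i, ∑ j, (‖x i * conj (x j)‖ ^ 2 + ‖y i * conj (y j)‖ ^ 2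
          - 2 * RCLike.re (y i * conj (y j) * conj (x i * conj (x j)))) := by
        refine sum_congr rfl fun i _ => sum_congr rfl fun j _ => ?_
        rw [@norm_sub_sq 𝕜, RCLike.inner_apply]
        ring
    _ = ‖x‖ ^ 4 + ‖y‖ ^ 4 - 2 * ‖⟪x, y⟫_𝕜‖ ^ 2 := by
        simp only [sum_add_distrib, sum_sub_distrib, ← mul_sum, ← map_sum, hsq, hcross,
          RCLike.mul_conj]
        norm_cast

end EuclideanSpace

theorem half_one_sub_mul_le {C S a b : ℝ} (hC : 0 ≤ C) (hS : 0 ≤ S) (hCS : C + S = 1)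
    (ha : 0 ≤ a) (hab : a ≤ b) : (1 - C) / 2 * (S * a + C * b) ≤ C * a + S * b :=
  calc (1 - C) / 2 * (S * a + C * b) = S / 2 * (S * a + C * b) := by rw [← hCS]; ring
    _ ≤ S / 2 * b := by gcongr; nlinarith
    _ ≤ C * a + S * b := by nlinarith [mul_nonneg hC ha, mul_nonneg hS (ha.trans hab)]

theorem null_vector_accuracy_general {n m : ℕ} (hn : 2 ≤ n)
    (M : EuclideanSpace ℂ (Fin n) →ₗ[ℂ] EuclideanSpace ℂ (Fin m))
    (x0 xnull : EuclideanSpace ℂ (Fin n))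
    (hx0 : ‖x0‖ = 1) (hxnull : ‖xnull‖ = 1)
    (hmin : ∀ x : EuclideanSpace ℂ (Fin n), ‖x‖ = 1 → ‖M xnull‖ ≤ ‖M x‖) :
    ∃ xp : EuclideanSpace ℂ (Fin n), ‖xp‖ = 1 ∧ (inner ℂ x0 xp : ℂ) = 0 ∧
      (1/4) * (∑ i, ∑ j, (norm
          (x0 i * (starRingEnd ℂ) (x0 j) - xnull i * (starRingEnd ℂ) (xnull j))) ^ 2) *
        ‖M xp‖ ^ 2 ≤ ‖M x0‖ ^ 2 := by
  obtain ⟨w, hw, hnw, s, hx0_eq⟩ :=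
    exists_norm_eq_one_inner_eq_zero_eq_inner_smul_add_smul (𝕜 := ℂ) (by simpa using hn) hxnull x0
  set c := ⟪xnull, x0⟫_ℂ with hc
  have hcs : ‖c‖ ^ 2 + ‖s‖ ^ 2 = 1 := by
    simpa [← hx0_eq, hx0, hxnull, hw] using (norm_smul_add_smul_sq_of_inner_eq_zero hnw c s).symm
  have hM : ⟪M xnull, M w⟫_ℂ = 0 :=
    inner_map_eq_zero_of_isMinOn_norm M.toContinuousLinearMap
      (fun x hx => hmin x (by simpa [hxnull] using hx)) hnw
  have hab : ‖M xnull‖ ^ 2 ≤ ‖M w‖ ^ 2 := pow_le_pow_left₀ (norm_nonneg _) (hmin w hw) 2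
  refine ⟨conj s • xnull + (-conj c) • w, ?_, ?_, ?_⟩
  · refine (pow_eq_one_iff_of_nonneg (norm_nonneg _) two_ne_zero).mp ?_
    rw [norm_smul_add_smul_sq_of_inner_eq_zero hnw, norm_neg, RCLike.norm_conj,
      RCLike.norm_conj, hxnull, hw]
    linarith
  · rw [hx0_eq]
    exact inner_smul_add_smul_conj_smul_add_neg_conj_smul (hxnull.trans hw.symm) hnw c s
  · rw [sum_sum_norm_mul_conj_sub_mul_conj_sq, hx0, hxnull, norm_inner_symm, ← hc, hx0_eq]
    simp only [map_add, map_smul, norm_smul_add_smul_sq_of_inner_eq_zero hM, norm_neg,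
      RCLike.norm_conj]
    calc _ = (1 - ‖c‖ ^ 2) / 2 * (‖s‖ ^ 2 * ‖M xnull‖ ^ 2 + ‖c‖ ^ 2 * ‖M w‖ ^ 2) := by ring
      _ ≤ _ := half_one_sub_mul_le (by positivity) (by positivity) hcs (by positivity) hab

/-- accuracy of the null vector. Let `n ≥ 2`, `M : ℂ^n → ℂ^m` linear,
`x0` a unit vector, and `x_null` a unit minimizer of `‖M x‖` over the unit sphere,
phase-adjusted so that `x0^* x_null ≥ 0` is real. Then there is a unit vector `x_⊥`
orthogonal to `x0` with
`(1/4)·‖x0 x0^* - x_null x_null^*‖_F² · ‖M x_⊥‖² ≤ ‖M x0‖²`, where the squared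
Frobenius norm is `∑ i j, |x0 i conj(x0 j) - x_null i conj(x_null j)|²`. -/
theorem null_vector_accuracy {n m : ℕ} (hn : 2 ≤ n)
    (M : EuclideanSpace ℂ (Fin n) →ₗ[ℂ] EuclideanSpace ℂ (Fin m))
    (x0 xnull : EuclideanSpace ℂ (Fin n))
    (hx0 : ‖x0‖ = 1) (hxnull : ‖xnull‖ = 1)
    (hmin : ∀ x : EuclideanSpace ℂ (Fin n), ‖x‖ = 1 → ‖M xnull‖ ≤ ‖M x‖)
    (hphase_im : (inner ℂ x0 xnull : ℂ).im = 0)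
    (hphase_re : 0 ≤ (inner ℂ x0 xnull : ℂ).re) :
    ∃ xp : EuclideanSpace ℂ (Fin n), ‖xp‖ = 1 ∧ (inner ℂ x0 xp : ℂ) = 0 ∧
      (1/4) * (∑ i, ∑ j, (norm
          (x0 i * (starRingEnd ℂ) (x0 j) - xnull i * (starRingEnd ℂ) (xnull j))) ^ 2) *
        ‖M xp‖ ^ 2 ≤ ‖M x0‖ ^ 2 :=
  null_vector_accuracy_general hn M x0 xnull hx0 hxnull hmin
end

section
/- Let X_1, …, X_N be i.i.d. real random variables, each with the exponential distribution of rate 1/2 (density (1/2) e^{−z/2} on [0,∞)). Let m be an integer with 1 ≤ m < N and set τ* = −2 ln(1 − m/N). Then for every δ > 0, the probability that more than N − m of the X_i exceed τ* + δ is at most exp( −(N/2) · δ² · e^{−δ} · (1 − m/N)² ); equivalently, with probability at least 1 − exp( −(N/2) δ² e^{−δ} (1 − m/N)² ), at least m of the values X_1, …, X_N are ≤ τ* + δ (i.e. the m-th smallest order statistic is ≤ τ* + δ). -/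
/-!
The number of indices with `τ* + δ < X i` is a sum of `N` independent Bernoulli variables of
success probability `exp (-(τ* + δ) / 2) = (1 - m/N) e^{-δ/2}`, whose mean lies
`N (1 - m/N) (1 - e^{-δ/2})` below `N - m`. Hoeffding's inequality bounds the probability of
exceeding `N - m` by `exp (-2 N (1 - m/N)² (1 - e^{-δ/2})²)`, and `x e^{-x} ≤ 1 - e^{-x}` at
`x = δ/2` turns this exponent into the stated one.
-/

open MeasureTheory ProbabilityTheory Real Finset
open scoped NNReal

lemma mul_exp_neg_le_one_sub_exp_neg (x : ℝ) : x * exp (-x) ≤ 1 - exp (-x) := by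
  have := mul_le_mul_of_nonneg_right (add_one_le_exp x) (exp_pos (-x)).le
  rw [← exp_add, add_neg_cancel, exp_zero] at this
  linarith

lemma sq_mul_exp_neg_le {x : ℝ} (hx : 0 ≤ x) :
    x ^ 2 * exp (-x) ≤ 4 * (1 - exp (-x / 2)) ^ 2 :=
  calc x ^ 2 * exp (-x) = (2 * (x / 2 * exp (-(x / 2)))) ^ 2 := by
        rw [mul_pow, mul_pow, ← exp_nat_mul]; ring_nf
    _ ≤ (2 * (1 - exp (-(x / 2)))) ^ 2 := by
        gcongr
        exact mul_exp_neg_le_one_sub_exp_neg _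
    _ = 4 * (1 - exp (-x / 2)) ^ 2 := by ring_nf

namespace ProbabilityTheory

variable {Ω ι : Type*} [MeasurableSpace Ω] {μ : Measure Ω}

lemma iIndepFun.iIndepSet_preimage {β : Type*} [MeasurableSpace β] {X : ι → Ω → β}
    (hX : iIndepFun X μ) (hmeas : ∀ i, Measurable (X i)) {S : ι → Set β}
    (hS : ∀ i, MeasurableSet (S i)) : iIndepSet (fun i ↦ X i ⁻¹' S i) μ :=
  (iIndepSet_iff_meas_biInter fun i ↦ hmeas i (hS i)).2 fun s ↦
    hX.measure_inter_preimage_eq_mul s fun i _ ↦ hS i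

lemma measureReal_lt_eq_of_measure_le_eq [IsProbabilityMeasure μ] {X : Ω → ℝ}
    (hX : Measurable X) {c a : ℝ} (h : μ {ω | X ω ≤ c} = ENNReal.ofReal (1 - a))
    (ha : a ≤ 1) : μ.real {ω | c < X ω} = a := by
  have hc : {ω | c < X ω} = {ω | X ω ≤ c}ᶜ := by ext; simp
  rw [hc, probReal_compl_eq_one_sub (measurableSet_le hX measurable_const), measureReal_def, h,
    ENNReal.toReal_ofReal (by linarith)]
  ring

section Hoeffding

variable [Fintype ι] {A : ι → Set Ω} [∀ ω, DecidablePred fun i ↦ ω ∈ A i]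

lemma iIndepSet.measureReal_sum_add_le_card_le (hA : iIndepSet A μ)
    (hAm : ∀ i, MeasurableSet (A i)) {ε : ℝ} (hε : 0 ≤ ε) :
    μ.real {ω | ∑ i, μ.real (A i) + ε ≤ #{i | ω ∈ A i}} ≤
      exp (-2 * ε ^ 2 / Fintype.card ι) := by
  have := hA.isProbabilityMeasure
  set Y : ι → Ω → ℝ := fun i ↦ (A i).indicator 1
  have hsubG : ∀ i ∈ (univ : Finset ι),
      HasSubgaussianMGF (fun ω ↦ Y i ω - μ.real (A i)) ((‖(1:ℝ) - 0‖₊ / 2) ^ 2) μ := by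
    intro i _
    rw [← integral_indicator_one (hAm i)]
    refine hasSubgaussianMGF_of_mem_Icc (measurable_const.indicator (hAm i)).aemeasurable ?_
    exact ae_of_all _ fun ω ↦ by by_cases h : ω ∈ A i <;> simp [Y, h]
  have hindep : iIndepFun (fun i ω ↦ Y i ω - μ.real (A i)) μ :=
    (hA.iIndepFun_indicator (β := ℝ)).comp (fun i y ↦ y - μ.real (A i)) fun _ ↦
      measurable_id.sub_const _
  have hsum (ω : Ω) : ∑ i, (Y i ω - μ.real (A i)) = #{i | ω ∈ A i} - ∑ i, μ.real (A i) := by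
    simp [Y, sum_sub_distrib, Set.indicator_apply]
  calc μ.real {ω | ∑ i, μ.real (A i) + ε ≤ #{i | ω ∈ A i}}
      = μ.real {ω | ε ≤ ∑ i, (Y i ω - μ.real (A i))} := by
        simp_rw [hsum, le_sub_iff_add_le']
    _ ≤ exp (-ε ^ 2 / (2 * ∑ i : ι, ((‖(1:ℝ) - 0‖₊ / 2) ^ 2 : ℝ≥0))) :=
        HasSubgaussianMGF.measure_sum_ge_le_of_iIndepFun hindep hsubG hε
    _ = exp (-2 * ε ^ 2 / Fintype.card ι) := by
        congr 1
        simp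
        ring

lemma iIndepSet.measureReal_lt_card_le (hA : iIndepSet A μ)
    (hAm : ∀ i, MeasurableSet (A i)) {p k : ℝ} (hp : ∀ i, μ.real (A i) = p)
    (hk : Fintype.card ι * p ≤ k) :
    μ.real {ω | k < #{i | ω ∈ A i}} ≤
      exp (-2 * (k - Fintype.card ι * p) ^ 2 / Fintype.card ι) := by
  have := hA.isProbabilityMeasure
  have hsub : {ω | k < #{i | ω ∈ A i}} ⊆
      {ω | ∑ i, μ.real (A i) + (k - Fintype.card ι * p) ≤ #{i | ω ∈ A i}} := by
    intro ω (hω : k < _)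
    rw [Set.mem_ofPred]
    simp only [hp, sum_const, card_univ, nsmul_eq_mul]
    linarith
  exact (measureReal_mono hsub).trans (hA.measureReal_sum_add_le_card_le hAm (sub_nonneg.2 hk))

end Hoeffding

end ProbabilityTheory

theorem exponential_order_statistic_bound_general {Ω : Type*} [MeasurableSpace Ω]
    (μ : Measure Ω) [IsProbabilityMeasure μ]
    (N m : ℕ) (hmN : m < N)
    (X : Fin N → Ω → ℝ) (hmeas : ∀ i, Measurable (X i))
    (hindep : iIndepFun X μ)
    (hlaw : ∀ i t, (0:ℝ) ≤ t →
      μ {ω | X i ω ≤ t} = ENNReal.ofReal (1 - Real.exp (-t/2)))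
    (τstar : ℝ) (hτ : τstar = -2 * Real.log (1 - (m : ℝ)/(N : ℝ)))
    (δ : ℝ) (hδ : 0 < δ) :
    μ {ω | (N - m : ℕ) <
        (Finset.univ.filter fun i => τstar + δ < X i ω).card} ≤
      ENNReal.ofReal
        (Real.exp (-((N : ℝ)/2) * δ^2 * Real.exp (-δ) * (1 - (m : ℝ)/(N : ℝ))^2)) := by
  have hN : (0 : ℝ) < N := by exact_mod_cast (Nat.zero_le m).trans_lt hmN
  set q := 1 - (m : ℝ) / N with hq
  have hq0 : 0 < q := by rw [hq, sub_pos, div_lt_one hN]; exact_mod_cast hmN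
  have hq1 : q ≤ 1 := sub_le_self _ (by positivity)
  set E := exp (-δ / 2)
  have hE : E ≤ 1 := exp_le_one_iff.2 (by linarith)
  set A : Fin N → Set Ω := fun i ↦ {ω | τstar + δ < X i ω}
  have hA : iIndepSet A μ := hindep.iIndepSet_preimage hmeas fun _ ↦ measurableSet_Ioi
  have htail (i : Fin N) : μ.real (A i) = q * E := by
    have hc : -(τstar + δ) / 2 = log q + -δ / 2 := by rw [hτ]; ring
    have hc0 : 0 ≤ τstar + δ := by rw [hτ]; nlinarith [log_nonpos hq0.le hq1]
    rw [measureReal_lt_eq_of_measure_le_eq (hmeas i) (hlaw i _ hc0)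
      (exp_le_one_iff.2 (by linarith)), hc, exp_add, exp_log hq0]
  have hNm : ((N - m : ℕ) : ℝ) = N * q := by rw [Nat.cast_sub hmN.le, hq]; field_simp
  have hbound := hA.measureReal_lt_card_le (fun i ↦ measurableSet_lt measurable_const (hmeas i))
    htail (k := (N - m : ℕ)) (by rw [hNm, Fintype.card_fin]; nlinarith)
  rw [← ENNReal.ofReal_toReal (measure_ne_top μ _), ← measureReal_def]
  refine ENNReal.ofReal_le_ofReal ?_
  calc _ = μ.real {ω | ((N - m : ℕ) : ℝ) < #{i | ω ∈ A i}} := by simp [A]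
    _ ≤ _ := hbound
    _ ≤ _ := by
        rw [exp_le_exp, hNm, Fintype.card_fin]
        have hδE := sq_mul_exp_neg_le hδ.le
        field_simp
        linarith

/-- order-statistic tail bound for i.i.d. exponential(rate 1/2) variables.
With `τ* = -2 ln(1 - m/N)` and any `δ > 0`, the probability that more than `N - m` of
the `X i` exceed `τ* + δ` is at most `exp(-(N/2) δ² e^{-δ} (1 - m/N)²)`. -/
theorem exponential_order_statistic_bound {Ω : Type*} [MeasurableSpace Ω]
    (μ : Measure Ω) [IsProbabilityMeasure μ]
    (N m : ℕ) (hm1 : 1 ≤ m) (hmN : m < N)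
    (X : Fin N → Ω → ℝ) (hmeas : ∀ i, Measurable (X i))
    (hindep : iIndepFun X μ)
    (hlaw : ∀ i t, (0:ℝ) ≤ t →
      μ {ω | X i ω ≤ t} = ENNReal.ofReal (1 - Real.exp (-t/2)))
    (τstar : ℝ) (hτ : τstar = -2 * Real.log (1 - (m : ℝ)/(N : ℝ)))
    (δ : ℝ) (hδ : 0 < δ) :
    μ {ω | (N - m : ℕ) <
        (Finset.univ.filter fun i => τstar + δ < X i ω).card} ≤
      ENNReal.ofReal
        (Real.exp (-((N : ℝ)/2) * δ^2 * Real.exp (-δ) * (1 - (m : ℝ)/(N : ℝ))^2)) :=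
  exponential_order_statistic_bound_general μ N m hmN X hmeas hindep hlaw τstar hτ δ hδ
end
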